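/- (Overlap of a product of subsystem ground states with the interacting ground state.) Let H_A (d_A×d_A) and H_B (d_B×d_B) be Hermitian complex matrices whose smallest eigenvalues are simple, with unit ground eigenvectors ψ_A, ψ_B and spectral gaps γ_A, γ_B > 0; set γ̃ := min(γ_A, γ_B). Let A_int be a Hermitian matrix on ℂ^{d_A d_B} with γ̃ > 2‖A_int‖, and let ψ be a unit eigenvector of H := H_A ⊗ 𝟙 + 𝟙 ⊗ H_B + A_int corresponding to its smallest eigenvalue. Then |⟨ψ, ψ_A ⊗ ψ_B⟩|² ≥ 1 − π‖A_int‖/(γ̃ − 2‖A_int‖). -/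

import Mathlib

/-!
In the product eigenbasis `vA j ⊗ vB k` the free Hamiltonian `H₀ = HA ⊗ 𝟙 + 𝟙 ⊗ HB` is diagonal
with entries `α j + β k`, so its ground energy `e₀ = α 0 + β 0` is simple, with ground state
`φ = ψA ⊗ ψB`, and every other entry is at least `e₀ + γ̃`. Writing `p = |⟨ψ, φ⟩|²`, the gap gives
`e₀ + γ̃ (1 - p) ≤ ⟨ψ, H₀ ψ⟩ = E₀ - ⟨ψ, A ψ⟩ ≤ E₀ + ‖A‖`, while the variational principle gives
`E₀ ≤ ⟨φ, H φ⟩ = e₀ + ⟨φ, A φ⟩ ≤ e₀ + ‖A‖`. Hence `1 - p ≤ 2‖A‖ / γ̃ ≤ π‖A‖ / (γ̃ - 2‖A‖)`.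
-/

open Matrix Kronecker

/-- The spectral norm (largest singular value) of a complex matrix, i.e. the operator norm
induced by the Euclidean norm. -/
noncomputable def specNorm {m : Type*} [Fintype m] [DecidableEq m] (M : Matrix m m ℂ) : ℝ :=
  ‖Matrix.toEuclideanCLM (𝕜 := ℂ) M‖

section Diagonalized

variable {n : Type*} [Fintype n]

lemma star_dotProduct_self_eq_sum (x : n → ℂ) :
    star x ⬝ᵥ x = ((∑ j, ‖x j‖ ^ 2 : ℝ) : ℂ) := by
  simp [dotProduct, Complex.conj_mul']

lemma star_dotProduct_mul_mul_star_mulVec (U M : Matrix n n ℂ) (v w : n → ℂ) :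
    star v ⬝ᵥ (U * M * star U) *ᵥ w = star (star U *ᵥ v) ⬝ᵥ M *ᵥ (star U *ᵥ w) := by
  rw [← mulVec_mulVec, ← mulVec_mulVec, dotProduct_mulVec, star_mulVec, star_eq_conjTranspose,
    conjTranspose_conjTranspose]

variable [DecidableEq n]

lemma star_dotProduct_diagonal_mulVec (d : n → ℝ) (x : n → ℂ) :
    star x ⬝ᵥ diagonal (fun j => (d j : ℂ)) *ᵥ x = ((∑ j, d j * ‖x j‖ ^ 2 : ℝ) : ℂ) := by
  simp only [dotProduct, mulVec_diagonal, Pi.star_apply, RCLike.star_def]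
  push_cast
  refine Finset.sum_congr rfl fun j _ => ?_
  rw [← Complex.conj_mul']
  ring

variable {U : Matrix n n ℂ}

lemma star_dotProduct_star_mulVec (hU : U ∈ unitary (Matrix n n ℂ)) (v w : n → ℂ) :
    star (star U *ᵥ v) ⬝ᵥ (star U *ᵥ w) = star v ⬝ᵥ w := by
  simpa [Unitary.mul_star_self_of_mem hU] using
    (star_dotProduct_mul_mul_star_mulVec U 1 v w).symm

lemma re_star_dotProduct_mulVec_eq_sum (U : Matrix n n ℂ) (d : n → ℝ) (w : n → ℂ) :
    (star w ⬝ᵥ (U * diagonal (fun j => (d j : ℂ)) * star U) *ᵥ w).re =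
      ∑ j, d j * ‖(star U *ᵥ w) j‖ ^ 2 := by
  rw [star_dotProduct_mul_mul_star_mulVec, star_dotProduct_diagonal_mulVec, Complex.ofReal_re]

lemma sum_norm_sq_star_mulVec (hU : U ∈ unitary (Matrix n n ℂ)) {w : n → ℂ}
    (hw : star w ⬝ᵥ w = 1) : ∑ j, ‖(star U *ᵥ w) j‖ ^ 2 = 1 := by
  have := star_dotProduct_self_eq_sum (star U *ᵥ w)
  rw [star_dotProduct_star_mulVec hU, hw] at this
  exact_mod_cast this.symm

lemma le_re_star_dotProduct_mulVec (hU : U ∈ unitary (Matrix n n ℂ)) {d : n → ℝ} {e : ℝ}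
    (he : ∀ j, e ≤ d j) {w : n → ℂ} (hw : star w ⬝ᵥ w = 1) :
    e ≤ (star w ⬝ᵥ (U * diagonal (fun j => (d j : ℂ)) * star U) *ᵥ w).re := by
  rw [re_star_dotProduct_mulVec_eq_sum]
  calc e = ∑ j, e * ‖(star U *ᵥ w) j‖ ^ 2 := by
        rw [← Finset.mul_sum, sum_norm_sq_star_mulVec hU hw, mul_one]
    _ ≤ _ := Finset.sum_le_sum fun j _ => by gcongr; exact he j

lemma add_mul_one_sub_le_re_star_dotProduct_mulVec (hU : U ∈ unitary (Matrix n n ℂ))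
    {d : n → ℝ} {j₀ : n} {γ : ℝ} (hd : ∀ j ≠ j₀, d j₀ + γ ≤ d j) {w : n → ℂ}
    (hw : star w ⬝ᵥ w = 1) :
    d j₀ + γ * (1 - ‖(star U *ᵥ w) j₀‖ ^ 2) ≤
      (star w ⬝ᵥ (U * diagonal (fun j => (d j : ℂ)) * star U) *ᵥ w).re := by
  set q := fun j => ‖(star U *ᵥ w) j‖ ^ 2
  have hq : ∑ j, q j = 1 := sum_norm_sq_star_mulVec hU hw
  rw [re_star_dotProduct_mulVec_eq_sum]
  have hq₀ : ∑ j ∈ Finset.univ.erase j₀, q j = 1 - q j₀ := by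
    rw [← hq, ← Finset.add_sum_erase _ _ (Finset.mem_univ j₀), add_sub_cancel_left]
  rw [← Finset.add_sum_erase _ _ (Finset.mem_univ j₀)]
  calc d j₀ + γ * (1 - q j₀)
        = d j₀ * q j₀ + ∑ j ∈ Finset.univ.erase j₀, (d j₀ + γ) * q j := by
        rw [← Finset.mul_sum, hq₀]; ring
    _ ≤ d j₀ * q j₀ + ∑ j ∈ Finset.univ.erase j₀, d j * q j := by
        gcongr with j hj
        exact hd j (Finset.ne_of_mem_erase hj)

lemma star_mulVec_eq_single_of_mulVec_eq (hU : U ∈ unitary (Matrix n n ℂ)) {d : n → ℝ}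
    {j₀ : n} (hd : ∀ j ≠ j₀, d j ≠ d j₀) {φ : n → ℂ}
    (hφ : (U * diagonal (fun j => (d j : ℂ)) * star U) *ᵥ φ = (d j₀ : ℂ) • φ) :
    star U *ᵥ φ = Pi.single j₀ ((star U *ᵥ φ) j₀) := by
  have hdiag :
      diagonal (fun j => (d j : ℂ)) *ᵥ (star U *ᵥ φ) = (d j₀ : ℂ) • (star U *ᵥ φ) := by
    rw [← mulVec_smul, ← hφ, mulVec_mulVec, mulVec_mulVec, ← Matrix.mul_assoc,
      ← Matrix.mul_assoc, Unitary.star_mul_self_of_mem hU, Matrix.one_mul]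
  ext j
  by_cases hj : j = j₀
  · subst hj; simp
  · have := congrFun hdiag j
    simp only [mulVec_diagonal, Pi.smul_apply, smul_eq_mul] at this
    rw [Pi.single_eq_of_ne hj]
    exact (mul_eq_mul_right_iff.mp this).resolve_left (by exact_mod_cast hd j hj)

lemma norm_star_dotProduct_sq_eq_of_mulVec_eq (hU : U ∈ unitary (Matrix n n ℂ)) {d : n → ℝ}
    {j₀ : n} (hd : ∀ j ≠ j₀, d j ≠ d j₀) {φ : n → ℂ}
    (hφ : (U * diagonal (fun j => (d j : ℂ)) * star U) *ᵥ φ = (d j₀ : ℂ) • φ)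
    (hφ₁ : star φ ⬝ᵥ φ = 1) (ψ : n → ℂ) :
    ‖star ψ ⬝ᵥ φ‖ ^ 2 = ‖(star U *ᵥ ψ) j₀‖ ^ 2 := by
  have hsingle := star_mulVec_eq_single_of_mulVec_eq hU hd hφ
  have hc : ‖(star U *ᵥ φ) j₀‖ = 1 := by
    have h := sum_norm_sq_star_mulVec hU hφ₁
    rw [Fintype.sum_eq_single j₀ fun j hj => by rw [hsingle, Pi.single_eq_of_ne hj, norm_zero,
      zero_pow two_ne_zero]] at h
    exact (pow_eq_one_iff_of_nonneg (norm_nonneg _) two_ne_zero).mp h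
  rw [← star_dotProduct_star_mulVec hU, hsingle, dotProduct_single, norm_mul, hc,
    mul_one, Pi.star_apply, norm_star]

lemma norm_star_dotProduct_mulVec_le_specNorm (M : Matrix n n ℂ) {w : n → ℂ}
    (hw : star w ⬝ᵥ w = 1) : ‖star w ⬝ᵥ M *ᵥ w‖ ≤ specNorm M := by
  set x : EuclideanSpace ℂ n := WithLp.toLp 2 w
  have hx : ‖x‖ = 1 := by
    have h : ‖x‖ ^ 2 = 1 := by
      rw [norm_sq_eq_re_inner (𝕜 := ℂ), EuclideanSpace.inner_toLp_toLp, dotProduct_comm, hw,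
        RCLike.one_re]
    exact (pow_eq_one_iff_of_nonneg (norm_nonneg _) two_ne_zero).mp h
  have heq : star w ⬝ᵥ M *ᵥ w = inner ℂ x (toEuclideanCLM (𝕜 := ℂ) M x) := by
    rw [toEuclideanCLM_toLp, EuclideanSpace.inner_toLp_toLp, dotProduct_comm]
  calc ‖star w ⬝ᵥ M *ᵥ w‖ ≤ ‖x‖ * ‖toEuclideanCLM (𝕜 := ℂ) M x‖ :=
        heq ▸ norm_inner_le_norm _ _
    _ ≤ ‖x‖ * (specNorm M * ‖x‖) := by gcongr; exact (toEuclideanCLM (𝕜 := ℂ) M).le_opNorm x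
    _ = specNorm M := by rw [hx, one_mul, mul_one]

lemma le_re_star_dotProduct_mulVec_of_isHermitian {H : Matrix n n ℂ} (hH : H.IsHermitian)
    {E : ℝ} (hE : ∀ (ν : ℝ) (w : n → ℂ), w ≠ 0 → H *ᵥ w = (ν : ℂ) • w → E ≤ ν) {w : n → ℂ}
    (hw : star w ⬝ᵥ w = 1) : E ≤ (star w ⬝ᵥ H *ᵥ w).re := by
  set V : Matrix n n ℂ := hH.eigenvectorUnitary.1
  have hspec : H = V * diagonal (fun j => (hH.eigenvalues j : ℂ)) * star V := by
    conv_lhs => rw [hH.spectral_theorem]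
    rfl
  rw [hspec]
  refine le_re_star_dotProduct_mulVec hH.eigenvectorUnitary.2
    (fun j => hE _ (hH.eigenvectorBasis j) ?_ ?_) hw
  · exact fun h => hH.eigenvectorBasis.orthonormal.ne_zero j (by ext i; exact congrFun h i)
  · rw [hH.mulVec_eigenvectorBasis, Complex.coe_smul]

theorem mul_one_sub_norm_star_dotProduct_sq_le (hU : U ∈ unitary (Matrix n n ℂ)) {d : n → ℝ}
    {j₀ : n} {γ : ℝ} (hγ : 0 < γ) (hd : ∀ j ≠ j₀, d j₀ + γ ≤ d j) {φ : n → ℂ}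
    (hφ : (U * diagonal (fun j => (d j : ℂ)) * star U) *ᵥ φ = (d j₀ : ℂ) • φ)
    (hφ₁ : star φ ⬝ᵥ φ = 1) {A : Matrix n n ℂ} (hA : A.IsHermitian) {ψ : n → ℂ}
    (hψ₁ : star ψ ⬝ᵥ ψ = 1) {E : ℝ}
    (hψ : (U * diagonal (fun j => (d j : ℂ)) * star U + A) *ᵥ ψ = (E : ℂ) • ψ)
    (hE : ∀ (ν : ℝ) (w : n → ℂ), w ≠ 0 →
      (U * diagonal (fun j => (d j : ℂ)) * star U + A) *ᵥ w = (ν : ℂ) • w → E ≤ ν) :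
    γ * (1 - ‖star ψ ⬝ᵥ φ‖ ^ 2) ≤ 2 * specNorm A := by
  set H₀ := U * diagonal (fun j => (d j : ℂ)) * star U
  have hH₀ : H₀.IsHermitian := isHermitian_mul_mul_conjTranspose U
    (isHermitian_diagonal_of_self_adjoint _ (by ext j; simp))
  have hAψ := (Complex.abs_re_le_norm _).trans (norm_star_dotProduct_mulVec_le_specNorm A hψ₁)
  have hAφ := (Complex.abs_re_le_norm _).trans (norm_star_dotProduct_mulVec_le_specNorm A hφ₁)
  have hψE : (star ψ ⬝ᵥ H₀ *ᵥ ψ).re + (star ψ ⬝ᵥ A *ᵥ ψ).re = E := by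
    rw [← Complex.add_re, ← dotProduct_add, ← add_mulVec, hψ, dotProduct_smul, hψ₁, smul_eq_mul,
      mul_one, Complex.ofReal_re]
  have hφE : E ≤ d j₀ + (star φ ⬝ᵥ A *ᵥ φ).re := by
    have := le_re_star_dotProduct_mulVec_of_isHermitian (hH₀.add hA) hE hφ₁
    rwa [add_mulVec, dotProduct_add, hφ, dotProduct_smul, hφ₁, smul_eq_mul, mul_one,
      Complex.add_re, Complex.ofReal_re] at this
  have hlow := add_mul_one_sub_le_re_star_dotProduct_mulVec hU hd hψ₁
  have hsimple : ∀ j ≠ j₀, d j ≠ d j₀ := fun j hj => (by linarith [hd j hj] : d j₀ < d j).ne'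
  rw [norm_star_dotProduct_sq_eq_of_mulVec_eq hU hsimple hφ hφ₁]
  linarith [abs_le.mp hAψ, abs_le.mp hAφ]

end Diagonalized

section Orthonormal

variable {n : Type*} [Fintype n] [DecidableEq n] {v : n → n → ℂ}

lemma mem_unitary_of_orthonormal_columns
    (hv : ∀ j k, star (v j) ⬝ᵥ v k = if j = k then 1 else 0) :
    of (fun i j => v j i) ∈ unitary (Matrix n n ℂ) := by
  refine mem_unitaryGroup_iff'.mpr (ext fun j k => ?_)
  simpa [mul_apply, one_apply, dotProduct] using hv j k

lemma eq_mul_diagonal_mul_star_of_orthonormal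
    (hv : ∀ j k, star (v j) ⬝ᵥ v k = if j = k then 1 else 0) {M : Matrix n n ℂ} {μ : n → ℝ}
    (heig : ∀ j, M *ᵥ v j = (μ j : ℂ) • v j) :
    M = of (fun i j => v j i) * diagonal (fun j => (μ j : ℂ)) * star (of fun i j => v j i) := by
  have hMV :
      M * of (fun i j => v j i) = of (fun i j => v j i) * diagonal (fun j => (μ j : ℂ)) := by
    ext i j
    rw [mul_diagonal]
    simpa [mul_apply, mulVec, dotProduct, mul_comm] using congrFun (heig j) i
  rw [← hMV, Matrix.mul_assoc, Unitary.mul_star_self_of_mem (mem_unitary_of_orthonormal_columns hv),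
    Matrix.mul_one]

end Orthonormal

section Kronecker

variable {R l m n p : Type*} [CommSemiring R] [Fintype m] [Fintype n]

lemma kronecker_mulVec_kronecker (A : Matrix l m R) (B : Matrix p n R) (x : m → R)
    (y : n → R) :
    (A ⊗ₖ B) *ᵥ (fun i => x i.1 * y i.2) = fun i => (A *ᵥ x) i.1 * (B *ᵥ y) i.2 := by
  ext i
  simp only [mulVec, dotProduct, Fintype.sum_prod_type, kroneckerMap_apply, Finset.sum_mul_sum]
  exact Finset.sum_congr rfl fun _ _ => Finset.sum_congr rfl fun _ _ => by ring

lemma star_kronecker_dotProduct_kronecker [StarRing R] (x x' : m → R) (y y' : n → R) :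
    star (fun i : m × n => x i.1 * y i.2) ⬝ᵥ (fun i => x' i.1 * y' i.2) =
      (star x ⬝ᵥ x') * (star y ⬝ᵥ y') := by
  simp only [dotProduct, Pi.star_apply, star_mul', Fintype.sum_prod_type, Finset.sum_mul_sum]
  exact Finset.sum_congr rfl fun _ _ => Finset.sum_congr rfl fun _ _ => by ring

lemma kronecker_one_add_one_kronecker_mulVec [DecidableEq m] [DecidableEq n]
    {A : Matrix m m R} {B : Matrix n n R} {a b : R} {x : m → R} {y : n → R} (hx : A *ᵥ x = a • x)
    (hy : B *ᵥ y = b • y) :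
    (A ⊗ₖ (1 : Matrix n n R) + (1 : Matrix m m R) ⊗ₖ B) *ᵥ (fun i => x i.1 * y i.2) =
      (a + b) • fun i => x i.1 * y i.2 := by
  ext i
  simp only [add_mulVec, kronecker_mulVec_kronecker, hx, hy, one_mulVec, Pi.add_apply,
    Pi.smul_apply, smul_eq_mul]
  ring

end Kronecker

lemma kronecker_one_add_one_kronecker_eq_mul_diagonal_mul_star {m n : Type*} [Fintype m]
    [DecidableEq m] [Fintype n] [DecidableEq n] {UA : Matrix m m ℂ} {UB : Matrix n n ℂ}
    (hUA : UA ∈ unitary (Matrix m m ℂ)) (hUB : UB ∈ unitary (Matrix n n ℂ)) (a : m → ℝ)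
    (b : n → ℝ) :
    (UA * diagonal (fun i => (a i : ℂ)) * star UA) ⊗ₖ (1 : Matrix n n ℂ) +
        (1 : Matrix m m ℂ) ⊗ₖ (UB * diagonal (fun j => (b j : ℂ)) * star UB) =
      (UA ⊗ₖ UB) * diagonal (fun i => ((a i.1 + b i.2 : ℝ) : ℂ)) * star (UA ⊗ₖ UB) := by
  have hdiag : diagonal (fun i : m × n => ((a i.1 + b i.2 : ℝ) : ℂ)) =
      diagonal (fun i => (a i : ℂ)) ⊗ₖ (1 : Matrix n n ℂ) +
        (1 : Matrix m m ℂ) ⊗ₖ diagonal (fun j => (b j : ℂ)) := by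
    rw [← diagonal_one, diagonal_kronecker_diagonal, ← diagonal_one, diagonal_kronecker_diagonal,
      diagonal_add]
    congr 1; ext i; push_cast; ring
  have hA : UA * UAᴴ = 1 := Unitary.mul_star_self_of_mem hUA
  have hB : UB * UBᴴ = 1 := Unitary.mul_star_self_of_mem hUB
  simp only [star_eq_conjTranspose]
  rw [hdiag, Matrix.mul_add, Matrix.add_mul, conjTranspose_kronecker,
    ← mul_kronecker_mul, ← mul_kronecker_mul, ← mul_kronecker_mul, ← mul_kronecker_mul,
    Matrix.mul_one, Matrix.mul_one, hA, hB]

lemma monotone_apply_one_le {m : ℕ} (hm : 1 < m) {α : Fin m → ℝ} (hα : Monotone α) {i : Fin m}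
    (hi : i ≠ ⟨0, Nat.zero_lt_of_lt hm⟩) : α ⟨1, hm⟩ ≤ α i :=
  hα <| Fin.le_def.mpr <| Nat.one_le_iff_ne_zero.mpr fun h => hi (Fin.ext h)

lemma add_add_min_le_of_monotone {dA dB : ℕ} (hdA : 1 < dA) (hdB : 1 < dB) {α : Fin dA → ℝ}
    {β : Fin dB → ℝ} (hα : Monotone α) (hβ : Monotone β) {j : Fin dA × Fin dB}
    (hj : j ≠ (⟨0, Nat.zero_lt_of_lt hdA⟩, ⟨0, Nat.zero_lt_of_lt hdB⟩)) :
    α ⟨0, Nat.zero_lt_of_lt hdA⟩ + β ⟨0, Nat.zero_lt_of_lt hdB⟩ +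
        min (α ⟨1, hdA⟩ - α ⟨0, Nat.zero_lt_of_lt hdA⟩)
          (β ⟨1, hdB⟩ - β ⟨0, Nat.zero_lt_of_lt hdB⟩) ≤ α j.1 + β j.2 := by
  obtain ⟨i, k⟩ := j
  have hmin := min_le_left (α ⟨1, hdA⟩ - α ⟨0, Nat.zero_lt_of_lt hdA⟩)
    (β ⟨1, hdB⟩ - β ⟨0, Nat.zero_lt_of_lt hdB⟩)
  have hmin' := min_le_right (α ⟨1, hdA⟩ - α ⟨0, Nat.zero_lt_of_lt hdA⟩)
    (β ⟨1, hdB⟩ - β ⟨0, Nat.zero_lt_of_lt hdB⟩)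
  by_cases hi : i = ⟨0, Nat.zero_lt_of_lt hdA⟩
  · subst hi
    have hk : k ≠ ⟨0, Nat.zero_lt_of_lt hdB⟩ := fun hk => hj (by rw [hk])
    linarith [monotone_apply_one_le hdB hβ hk]
  · have hk : β ⟨0, Nat.zero_lt_of_lt hdB⟩ ≤ β k := hβ (Fin.le_def.mpr (Nat.zero_le _))
    linarith [monotone_apply_one_le hdA hα hi]

lemma one_sub_pi_mul_div_le {a γ p : ℝ} (ha : 0 ≤ a) (hγ : 2 * a < γ)
    (h : γ * (1 - p) ≤ 2 * a) : 1 - Real.pi * a / (γ - 2 * a) ≤ p := by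
  have hγ₀ : 0 < γ := by linarith
  have h₁ : 1 - p ≤ 2 * a / γ := by rwa [le_div_iff₀ hγ₀, mul_comm]
  have h₂ : 2 * a / γ ≤ Real.pi * a / (γ - 2 * a) := by
    rw [div_le_div_iff₀ hγ₀ (by linarith)]
    nlinarith [Real.pi_gt_three, mul_nonneg ha hγ₀.le]
  linarith

/-- **Overlap of the product of subsystem ground states with the interacting ground state.**
Let `HA, HB` be Hermitian with nondecreasing eigenvalue listings `α, β` (orthonormal
eigenbases `vA, vB`), simple smallest eigenvalues with unit ground eigenvectors `ψA, ψB`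
and spectral gaps `γA = α 1 - α 0 > 0`, `γB = β 1 - β 0 > 0`; set `γ̃ = min γA γB`.  Let
`Aint` be Hermitian on the product space with `γ̃ > 2 ‖Aint‖`, and let `ψ` be a unit
eigenvector of `H = HA ⊗ 𝟙 + 𝟙 ⊗ HB + Aint` for its smallest eigenvalue.  Then
`|⟨ψ, ψA ⊗ ψB⟩|² ≥ 1 - π ‖Aint‖ / (γ̃ - 2 ‖Aint‖)`. -/
theorem product_ground_state_overlap {dA dB : ℕ} (hdA : 2 ≤ dA) (hdB : 2 ≤ dB)
    (HA : Matrix (Fin dA) (Fin dA) ℂ) (HB : Matrix (Fin dB) (Fin dB) ℂ)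
    (α : Fin dA → ℝ) (β : Fin dB → ℝ) (hα : Monotone α) (hβ : Monotone β)
    (vA : Fin dA → (Fin dA → ℂ)) (vB : Fin dB → (Fin dB → ℂ))
    (hvA : ∀ j k, star (vA j) ⬝ᵥ vA k = if j = k then 1 else 0)
    (hvB : ∀ j k, star (vB j) ⬝ᵥ vB k = if j = k then 1 else 0)
    (heigA : ∀ j, HA.mulVec (vA j) = (α j : ℂ) • vA j)
    (heigB : ∀ j, HB.mulVec (vB j) = (β j : ℂ) • vB j)
    (ψA : Fin dA → ℂ) (ψB : Fin dB → ℂ)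
    (hψA1 : star ψA ⬝ᵥ ψA = 1) (hψB1 : star ψB ⬝ᵥ ψB = 1)
    (hψA : HA.mulVec ψA = (α ⟨0, by omega⟩ : ℂ) • ψA)
    (hψB : HB.mulVec ψB = (β ⟨0, by omega⟩ : ℂ) • ψB)
    (Aint : Matrix (Fin dA × Fin dB) (Fin dA × Fin dB) ℂ) (hAint : Aint.IsHermitian)
    (hgap : 2 * specNorm Aint <
      min (α ⟨1, by omega⟩ - α ⟨0, by omega⟩) (β ⟨1, by omega⟩ - β ⟨0, by omega⟩))
    (ψ : Fin dA × Fin dB → ℂ) (hψ1 : star ψ ⬝ᵥ ψ = 1) (E0 : ℝ)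
    (hψ : (HA ⊗ₖ (1 : Matrix (Fin dB) (Fin dB) ℂ) +
      (1 : Matrix (Fin dA) (Fin dA) ℂ) ⊗ₖ HB + Aint).mulVec ψ = (E0 : ℂ) • ψ)
    (hE0min : ∀ (ν : ℝ) (w : Fin dA × Fin dB → ℂ), w ≠ 0 →
      (HA ⊗ₖ (1 : Matrix (Fin dB) (Fin dB) ℂ) +
        (1 : Matrix (Fin dA) (Fin dA) ℂ) ⊗ₖ HB + Aint).mulVec w = (ν : ℂ) • w → E0 ≤ ν) :
    1 - Real.pi * specNorm Aint /
        (min (α ⟨1, by omega⟩ - α ⟨0, by omega⟩) (β ⟨1, by omega⟩ - β ⟨0, by omega⟩) -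
          2 * specNorm Aint) ≤
      ‖(star ψ ⬝ᵥ fun i => ψA i.1 * ψB i.2)‖ ^ 2 := by
  have hUA := mem_unitary_of_orthonormal_columns hvA
  have hUB := mem_unitary_of_orthonormal_columns hvB
  have hH₀ : HA ⊗ₖ (1 : Matrix (Fin dB) (Fin dB) ℂ) + (1 : Matrix (Fin dA) (Fin dA) ℂ) ⊗ₖ HB =
      (of (fun i j => vA j i) ⊗ₖ of (fun i j => vB j i)) *
        diagonal (fun i => ((α i.1 + β i.2 : ℝ) : ℂ)) *
          star (of (fun i j => vA j i) ⊗ₖ of (fun i j => vB j i)) := by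
    rw [eq_mul_diagonal_mul_star_of_orthonormal hvA heigA,
      eq_mul_diagonal_mul_star_of_orthonormal hvB heigB]
    exact kronecker_one_add_one_kronecker_eq_mul_diagonal_mul_star hUA hUB α β
  have hφ := kronecker_one_add_one_kronecker_mulVec hψA hψB
  rw [← Complex.ofReal_add, hH₀] at hφ
  rw [hH₀] at hψ hE0min
  have hφ₁ :
      star (fun i : Fin dA × Fin dB => ψA i.1 * ψB i.2) ⬝ᵥ (fun i => ψA i.1 * ψB i.2) = 1 := by
    rw [star_kronecker_dotProduct_kronecker, hψA1, hψB1, one_mul]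
  have hγ := (mul_nonneg zero_le_two (norm_nonneg _)).trans_lt hgap
  exact one_sub_pi_mul_div_le (norm_nonneg _) hgap <|
    mul_one_sub_norm_star_dotProduct_sq_le (kronecker_mem_unitary hUA hUB) hγ
      (fun j hj => add_add_min_le_of_monotone hdA hdB hα hβ hj) hφ hφ₁ hAint hψ1 hψ hE0min
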